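/- For all θ, λ ∈ ℝ, setting κ = λ·(1−λ), the following identity holds: 1 − |γ(θ,λ)|² = 4·κ·f(κ,θ), where f(κ,θ) = 2 − 6κ + 2κ² − κ³ + (1 − 3κ − 2κ² + 2κ³)·cos θ − κ³·cos²θ. -/

import Mathlib

/-!
With `z = e^{-iθ}`, `γ = a + c z + b z²` has real coefficients `a = (1-λ)⁴`, `b = λ⁴`,
`c = -2λ(1 - 2λ² + λ³)`. On the unit circle `|a + c z + b z²|²` is a polynomial in `Re z = cos θ`,
and the identity becomes a polynomial identity in `λ` and `cos θ`.
-/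

/-- The determinant `γ(θ,λ)` of the CIP amplification matrix. -/
noncomputable def cipγ (θ lam : ℝ) : ℂ :=
  (1 - (lam : ℂ))^4 + Complex.exp (-(2 * Complex.I * θ)) * lam^4
    - 2 * Complex.exp (-(Complex.I * θ)) * lam * (1 - 2*lam^2 + lam^3)

theorem Complex.sq_norm_real_quadratic_of_norm_eq_one (a b c : ℝ) {z : ℂ} (hz : ‖z‖ = 1) :
    ‖(a : ℂ) + c * z + b * z ^ 2‖ ^ 2
      = (a - b) ^ 2 + c ^ 2 + 2 * c * (a + b) * z.re + 4 * a * b * z.re ^ 2 := by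
  have hsq : z.re ^ 2 + z.im ^ 2 = 1 := by
    simpa [Complex.sq_norm, Complex.normSq_apply, hz, ← pow_two] using (Complex.sq_norm z).symm
  rw [Complex.sq_norm, Complex.normSq_apply]
  simp only [pow_two, Complex.add_re, Complex.add_im, Complex.mul_re, Complex.mul_im,
    Complex.ofReal_re, Complex.ofReal_im]
  linear_combination (b ^ 2 * (1 + z.re ^ 2 + z.im ^ 2) + c ^ 2 + 2 * b * c * z.re - 2 * a * b) * hsq

theorem cipγ_eq_quadratic_exp (θ lam : ℝ) : cipγ θ lam = ((1 - lam) ^ 4 : ℝ)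
    + ((-2 * lam * (1 - 2 * lam ^ 2 + lam ^ 3) : ℝ) : ℂ) * Complex.exp (-θ * Complex.I)
    + ((lam ^ 4 : ℝ) : ℂ) * Complex.exp (-θ * Complex.I) ^ 2 := by
  rw [cipγ, ← Complex.exp_nat_mul]
  push_cast
  ring_nf

/-- With `κ = λ(1−λ)`,
`1 − |γ(θ,λ)|² = 4κ·(2 − 6κ + 2κ² − κ³ + (1 − 3κ − 2κ² + 2κ³)cos θ − κ³cos²θ)`. -/
theorem stmt_10 (θ lam κ : ℝ) (hκ : κ = lam * (1 - lam)) :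
    1 - ‖cipγ θ lam‖ ^ 2
      = 4 * κ * (2 - 6*κ + 2*κ^2 - κ^3 + (1 - 3*κ - 2*κ^2 + 2*κ^3) * Real.cos θ
          - κ^3 * Real.cos θ ^ 2) := by
  have hnorm : ‖Complex.exp (-θ * Complex.I)‖ = 1 := by
    rw [← Complex.ofReal_neg, Complex.norm_exp_ofReal_mul_I]
  have hre : (Complex.exp (-θ * Complex.I)).re = Real.cos θ := by
    rw [← Complex.ofReal_neg, Complex.exp_ofReal_mul_I_re, Real.cos_neg]
  rw [cipγ_eq_quadratic_exp, Complex.sq_norm_real_quadratic_of_norm_eq_one _ _ _ hnorm, hre, hκ]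
  ring
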